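/- Let φ_t^k : FΩ_k → FΩ_{k−t} send each k-subset to the sum of its (k−t)-subsets and let φ_t^{k⋆} : FΩ_{k−t} → FΩ_k send each (k−t)-subset to the sum of the k-subsets containing it. Then for Y ∈ Ω_k: Y φ_t^k φ_t^{k⋆} = Σ_{d=0}^{t} C(k−d, t−d) Σ_{X ∈ Ω_k, |X △ Y| = 2d} X, where △ denotes symmetric difference. -/

import Mathlib

/-
The coefficient of a `k`-subset `X` in `Y φ φ⋆` counts the `(k - t)`-subsets of `X ∩ Y`, so it is
`C(|X ∩ Y|, k - t)`. If `|X △ Y| = 2d` then `|X ∩ Y| = k - d`, and `C(k - d, k - t) = C(k - d, t - d)`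
for `d ≤ t`, while it vanishes for `d > t`.
-/

/-- The free module over `R` on the `k`-element subsets of `{1,…,n}` (here `k : ℤ`,
so that the module is zero for `k < 0`). -/
def FOmega (R : Type*) [CommRing R] (n : ℕ) (k : ℤ) : Type _ :=
  {s : Finset (Fin n) // (s.card : ℤ) = k} →₀ R

noncomputable instance (R : Type*) [CommRing R] (n : ℕ) (k : ℤ) :
    AddCommGroup (FOmega R n k) := Finsupp.instAddCommGroup

noncomputable instance (R : Type*) [CommRing R] (n : ℕ) (k : ℤ) :
    Module R (FOmega R n k) := Finsupp.module _ _

/-- The multistep boundary map `FΩ_a → FΩ_b`, sending a subset `Y` of size `a`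
to the sum of all its subsets of size `b` (this is `φ_t^a` with `t = a - b`). -/
noncomputable def phi (R : Type*) [CommRing R] (n : ℕ) (a b : ℤ) :
    FOmega R n a →ₗ[R] FOmega R n b :=
  Finsupp.lift _ R _ fun Y =>
    ∑ X ∈ (Y.1.powerset.filter fun X => (X.card : ℤ) = b).attach,
      Finsupp.single ⟨X.1, (Finset.mem_filter.mp X.2).2⟩ (1 : R)

/-- The dual multistep map `FΩ_a → FΩ_b` (for `b ≥ a`), sending a subset `Y` of size
`a` to the sum of all subsets of size `b` containing it (this is `φ_t^{b⋆}` with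
`t = b - a`). -/
noncomputable def phiStar (R : Type*) [CommRing R] (n : ℕ) (a b : ℤ) :
    FOmega R n a →ₗ[R] FOmega R n b :=
  Finsupp.lift _ R _ fun Y =>
    ∑ Z ∈ Finset.univ.filter
        (fun Z : {s : Finset (Fin n) // (s.card : ℤ) = b} => Y.1 ⊆ Z.1),
      Finsupp.single Z (1 : R)

open scoped symmDiff
open Finset

abbrev Omega (n : ℕ) (k : ℤ) : Type := {s : Finset (Fin n) // (s.card : ℤ) = k}

-- `FOmega` is a plain `def`, so its elements are evaluated through this reinterpretation.
abbrev FOmega.coeff {R : Type*} [CommRing R] {n : ℕ} {k : ℤ} (f : FOmega R n k) :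
    Omega n k →₀ R := f

section Coefficients

variable (R : Type*) [CommRing R] {n : ℕ} {a b : ℤ}

theorem phi_single_coeff (Y : Omega n a) (X : Omega n b) :
    (phi R n a b (Finsupp.single Y 1)).coeff X = if X.1 ⊆ Y.1 then 1 else 0 := by
  show (Finsupp.sum (Finsupp.single Y (1 : R)) fun Y' r => r •
    ∑ X ∈ (Y'.1.powerset.filter fun X => (X.card : ℤ) = b).attach,
      (Finsupp.single ⟨X.1, (Finset.mem_filter.mp X.2).2⟩ (1 : R) : Omega n b →₀ R)) X = _
  simp only [Finsupp.sum_single_index, zero_smul, one_smul, Finsupp.finsetSum_apply,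
    Finsupp.single_apply, Subtype.ext_iff]
  rw [sum_attach _ fun S => if S = X.1 then (1 : R) else 0, sum_ite_eq']
  simp [X.2]

theorem phiStar_coeff (f : FOmega R n a) (Z : Omega n b) :
    (phiStar R n a b f).coeff Z = ∑ S, if S.1 ⊆ Z.1 then f.coeff S else 0 := by
  show (Finsupp.sum f.coeff fun S r => r • ∑ Z' ∈ Finset.univ.filter
        (fun Z' : Omega n b => S.1 ⊆ Z'.1), (Finsupp.single Z' (1 : R) : Omega n b →₀ R)) Z = _
  rw [Finsupp.sum_fintype _ _ (by simp)]
  simp [Finsupp.finsetSum_apply, Finsupp.single_apply]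

end Coefficients

theorem card_omega_subset_eq_choose {n m : ℕ} {b : ℤ} (hb : b = m) (T : Finset (Fin n)) :
    #{S : Omega n b | S.1 ⊆ T} = T.card.choose m := by
  subst hb
  rw [← card_powersetCard, ← card_map (Function.Embedding.subtype _)]
  congr 1
  ext S
  simp [mem_powersetCard, and_comm]

theorem card_symmDiff_of_card_eq {α : Type*} [DecidableEq α] {X Y : Finset α} {k : ℕ}
    (hX : #X = k) (hY : #Y = k) : #(X ∆ Y) = 2 * (k - #(X ∩ Y)) := by
  have h1 : #(X ∆ Y) = #(X ∪ Y) - #(X ∩ Y) := by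
    rw [symmDiff_eq_sup_sdiff_inf, sup_eq_union, inf_eq_inter]
    exact card_sdiff_of_subset inter_subset_union
  have h2 := card_union_add_card_inter X Y
  omega

theorem choose_sub_sub_eq_ite {k t d : ℕ} (hdk : d ≤ k) (htk : t ≤ k) :
    (k - d).choose (k - t) = if d ≤ t then (k - d).choose (t - d) else 0 := by
  split_ifs with hdt
  · exact Nat.choose_symm_of_eq_add (by omega)
  · exact Nat.choose_eq_zero_of_lt (by omega)

theorem phiStar_phi_single_coeff (R : Type*) [CommRing R] {n : ℕ} {a b c : ℤ}
    (Y : Omega n a) (X : Omega n c) :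
    (phiStar R n b c (phi R n a b (Finsupp.single Y 1))).coeff X =
      #{S : Omega n b | S.1 ⊆ X.1 ∩ Y.1} := by
  simp only [phiStar_coeff, phi_single_coeff, subset_inter_iff, ← ite_and, sum_boole]

theorem phi_phiStar_apply_general (R : Type*) [CommRing R] (n : ℕ) (k t : ℕ)
    (htk : t ≤ k)
    (Y : {s : Finset (Fin n) // (s.card : ℤ) = (k : ℤ)}) :
    phiStar R n ((k : ℤ) - t) k (phi R n k ((k : ℤ) - t) (Finsupp.single Y 1)) =
      ∑ d ∈ Finset.range (t + 1), ((k - d).choose (t - d) : R) •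
        ∑ X ∈ Finset.univ.filter
            (fun X : {s : Finset (Fin n) // (s.card : ℤ) = (k : ℤ)} =>
              (X.1 ∆ Y.1).card = 2 * d),
          Finsupp.single X (1 : R) := by
  refine Finsupp.ext fun X => ?_
  have hX : #X.1 = k := by exact_mod_cast X.2
  have hY : #Y.1 = k := by exact_mod_cast Y.2
  have hc : #(X.1 ∩ Y.1) ≤ k := (card_le_card inter_subset_right).trans_eq hY
  have hsymm := card_symmDiff_of_card_eq hX hY
  rw [phiStar_phi_single_coeff, card_omega_subset_eq_choose (Nat.cast_sub htk).symm,
    ← Nat.sub_sub_self hc, choose_sub_sub_eq_ite (Nat.sub_le _ _) htk]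
  simp only [Finsupp.finsetSum_apply, Finsupp.smul_apply, Finsupp.single_apply, sum_ite_eq',
    mem_filter, mem_univ, true_and, smul_eq_mul, mul_boole, hsymm]
  simp only [mul_eq_mul_left_iff, OfNat.ofNat_ne_zero, or_false, sum_ite_eq, mem_range,
    Nat.lt_succ_iff, Nat.cast_ite, Nat.cast_zero]

/-- for a `k`-subset `Y`, applying `φ_t^k` and then the dual map
`φ_t^{k⋆}` gives `∑_{d=0}^{t} C(k-d, t-d) ∑_{X : |X △ Y| = 2d} X`. -/
theorem phi_phiStar_apply (R : Type*) [CommRing R] (n : ℕ) (k t : ℕ)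
    (htk : t ≤ k) (hkn : k ≤ n)
    (Y : {s : Finset (Fin n) // (s.card : ℤ) = (k : ℤ)}) :
    phiStar R n ((k : ℤ) - t) k (phi R n k ((k : ℤ) - t) (Finsupp.single Y 1)) =
      ∑ d ∈ Finset.range (t + 1), ((k - d).choose (t - d) : R) •
        ∑ X ∈ Finset.univ.filter
            (fun X : {s : Finset (Fin n) // (s.card : ℤ) = (k : ℤ)} =>
              (X.1 ∆ Y.1).card = 2 * d),
          Finsupp.single X (1 : R) :=
  phi_phiStar_apply_general R n k t htk Y
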